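/- Let n ≥ 2, let A be a real n×n singular irreducible M-matrix, and fix an index j0 with 1 ≤ j0 ≤ n−1. For every pattern S_L ⊆ {(i,j) : 1 ≤ j ≤ i ≤ n} that contains all diagonal pairs (i,i) and does not contain (n,j0), there exists a unique lower triangular matrix L_G with (L_G)_{ij} = 0 for (i,j) ∉ S_L and (L_G A)_{ij} = δ_{ij} for all (i,j) ∈ S_L; and for every pattern S_U ⊆ {(i,j) : 1 ≤ i ≤ j ≤ n} that contains all diagonal pairs (i,i) and does not contain (j0,n), there exists a unique upper triangular matrix U_G with (U_G)_{ij} = 0 for (i,j) ∉ S_U and (A U_G)_{ij} = δ_{ij} for all (i,j) ∈ S_U. -/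

import Mathlib

open Matrix

/-- The spectral radius of a real matrix: the maximum modulus of its complex
eigenvalues (supremum of moduli of elements of the complex spectrum). -/
noncomputable def specRad {n : ℕ} (B : Matrix (Fin n) (Fin n) ℝ) : ℝ :=
  sSup ((fun z : ℂ => ‖z‖) '' spectrum ℂ (B.map Complex.ofReal))

/-- A real square matrix is a Z-matrix if its off-diagonal entries are nonpositive. -/
def IsZMatrix {n : ℕ} (A : Matrix (Fin n) (Fin n) ℝ) : Prop :=
  ∀ i j, i ≠ j → A i j ≤ 0

/-- A Z-matrix `A` is a nonsingular M-matrix if `A = s • 1 - B` with `B`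
entrywise nonnegative and `s > ρ(B)`. -/
def IsNonsingularMMatrix {n : ℕ} (A : Matrix (Fin n) (Fin n) ℝ) : Prop :=
  IsZMatrix A ∧ ∃ (s : ℝ) (B : Matrix (Fin n) (Fin n) ℝ),
    (∀ i j, 0 ≤ B i j) ∧ specRad B < s ∧ A = s • (1 : Matrix (Fin n) (Fin n) ℝ) - B

/-- A Z-matrix `A` is a singular M-matrix if `A = ρ(B) • 1 - B` with `B`
entrywise nonnegative. -/
def IsSingularMMatrix {n : ℕ} (A : Matrix (Fin n) (Fin n) ℝ) : Prop :=
  IsZMatrix A ∧ ∃ B : Matrix (Fin n) (Fin n) ℝ,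
    (∀ i j, 0 ≤ B i j) ∧ A = specRad B • (1 : Matrix (Fin n) (Fin n) ℝ) - B

/-- A matrix is irreducible if its directed graph (edge `i → j` iff `A i j ≠ 0`)
is strongly connected. -/
def IsIrreducibleMatrix {n : ℕ} (A : Matrix (Fin n) (Fin n) ℝ) : Prop :=
  ∀ i j : Fin n, Relation.ReflTransGen (fun a b : Fin n => A a b ≠ 0) i j

/-- Lower triangular real matrix. -/
def IsLowerTri {n : ℕ} (L : Matrix (Fin n) (Fin n) ℝ) : Prop :=
  ∀ i j : Fin n, i < j → L i j = 0

/-- Upper triangular real matrix. -/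
def IsUpperTri {n : ℕ} (U : Matrix (Fin n) (Fin n) ℝ) : Prop :=
  ∀ i j : Fin n, j < i → U i j = 0

/-- `L` is an FSAI lower triangular factor of `A` for the pattern `S`:
`L` is lower triangular, vanishes off the pattern, and `(L * A) i j = δ i j`
on the pattern. -/
def IsFSAILowerFactor {n : ℕ} (A L : Matrix (Fin n) (Fin n) ℝ)
    (S : Set (Fin n × Fin n)) : Prop :=
  IsLowerTri L ∧ (∀ p : Fin n × Fin n, p ∉ S → L p.1 p.2 = 0) ∧
    ∀ p : Fin n × Fin n, p ∈ S → (L * A) p.1 p.2 = if p.1 = p.2 then 1 else 0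

/-- `U` is an FSAI upper triangular factor of `A` for the pattern `S`:
`U` is upper triangular, vanishes off the pattern, and `(A * U) i j = δ i j`
on the pattern. -/
def IsFSAIUpperFactor {n : ℕ} (A U : Matrix (Fin n) (Fin n) ℝ)
    (S : Set (Fin n × Fin n)) : Prop :=
  IsUpperTri U ∧ (∀ p : Fin n × Fin n, p ∉ S → U p.1 p.2 = 0) ∧
    ∀ p : Fin n × Fin n, p ∈ S → (A * U) p.1 p.2 = if p.1 = p.2 then 1 else 0

/-! Row `i` of an FSAI factor solves a linear system whose matrix is the principal submatrix of
`A` on the pattern of row `i` (of column `i` for the upper factor). A triangular pattern without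
`(n, j0)` leaves out an entry in every row, so all these submatrices are proper, and it suffices
that proper principal submatrices of `A = ρ(B) I - B`, `B ≥ 0` irreducible, are nonsingular.
A null vector `x` of one of them gives `w = |x|` with `ρ(B) w ≤ B w`, `w ≠ 0`, and `w` vanishing
somewhere. By irreducibility the inequality is strict at an edge leaving the support of `w`, and a
power of `1 + B` with positive entries turns `w` and the defect `B w - ρ(B) w` into positive
vectors, so the Collatz–Wielandt bound (a consequence of Gelfand's formula) gives
`ρ(B) > ρ(B)`. -/

attribute [local instance] Matrix.linftyOpNormedAddCommGroup Matrix.linftyOpNormedRing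
  Matrix.linftyOpNormedAlgebra

open Filter Topology

theorem ofReal_le_spectralRadius_of_mul_pow_le_norm_pow {A : Type*} [NormedRing A]
    [NormedAlgebra ℂ A] [CompleteSpace A] (a : A) {c s : ℝ} (hc : 0 < c) (hs : 0 ≤ s)
    (h : ∀ k : ℕ, c * s ^ k ≤ ‖a ^ k‖) : ENNReal.ofReal s ≤ spectralRadius ℂ a := by
  have hroot : Tendsto (fun k : ℕ => ENNReal.ofReal (c ^ (1 / (k : ℝ)) * s)) atTop
      (𝓝 (ENNReal.ofReal s)) := by
    have hc_root : Tendsto (fun k : ℕ => c ^ (1 / (k : ℝ))) atTop (𝓝 1) := by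
      simpa using tendsto_const_nhds.rpow tendsto_one_div_atTop_nhds_zero_nat (Or.inl hc.ne')
    exact (ENNReal.continuous_ofReal.tendsto s).comp (by simpa using hc_root.mul_const s)
  refine le_of_tendsto_of_tendsto hroot
    (spectrum.pow_norm_pow_one_div_tendsto_nhds_spectralRadius a) ?_
  filter_upwards [eventually_ge_atTop 1] with k hk
  refine ENNReal.ofReal_le_ofReal ?_
  have hk0 : (k : ℝ) ≠ 0 := by positivity
  calc c ^ (1 / (k : ℝ)) * s = (c * s ^ k) ^ (1 / (k : ℝ)) := by
        rw [Real.mul_rpow hc.le (by positivity), ← Real.rpow_natCast, ← Real.rpow_mul hs,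
          mul_one_div_cancel hk0, Real.rpow_one]
    _ ≤ ‖a ^ k‖ ^ (1 / (k : ℝ)) := by gcongr; exact h k

theorem specRad_nonneg {n : ℕ} (B : Matrix (Fin n) (Fin n) ℝ) : 0 ≤ specRad B :=
  Real.sSup_nonneg (by rintro _ ⟨z, -, rfl⟩; exact norm_nonneg z)

theorem spectralRadius_map_ofReal_le_specRad {n : ℕ} (B : Matrix (Fin n) (Fin n) ℝ) :
    spectralRadius ℂ (B.map Complex.ofReal) ≤ ENNReal.ofReal (specRad B) := by
  have hbdd : BddAbove ((fun z : ℂ => ‖z‖) '' spectrum ℂ (B.map Complex.ofReal)) :=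
    ((spectrum.isCompact _).image continuous_norm).bddAbove
  refine iSup₂_le fun z hz => ?_
  rw [← ENNReal.ofReal_coe_nnreal, coe_nnnorm]
  exact ENNReal.ofReal_le_ofReal (le_csSup hbdd ⟨z, hz, rfl⟩)

theorem Matrix.linfty_opNorm_map_ofReal {m n : Type*} [Fintype m] [Fintype n]
    (A : Matrix m n ℝ) : ‖A.map Complex.ofReal‖ = ‖A‖ := by
  simp [Matrix.linfty_opNorm_def]

theorem Matrix.mulVec_mono_of_nonneg {m n R : Type*} [Fintype n] [Semiring R] [PartialOrder R]
    [IsOrderedRing R] {B : Matrix m n R} (hB : ∀ i j, 0 ≤ B i j) {x y : n → R} (h : x ≤ y) :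
    B *ᵥ x ≤ B *ᵥ y :=
  fun i => dotProduct_le_dotProduct_of_nonneg_left h (hB i)

theorem pow_smul_le_pow_mulVec {ι R : Type*} [Fintype ι] [DecidableEq ι] [CommSemiring R]
    [PartialOrder R] [IsOrderedRing R] {B : Matrix ι ι R} (hB : ∀ i j, 0 ≤ B i j)
    {v : ι → R} {s : R} (hs : 0 ≤ s) (h : s • v ≤ B *ᵥ v) (k : ℕ) :
    s ^ k • v ≤ B ^ k *ᵥ v := by
  induction k with
  | zero => simp
  | succ k ih =>
    calc s ^ (k + 1) • v = s ^ k • (s • v) := by rw [pow_succ, mul_smul]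
      _ ≤ s ^ k • (B *ᵥ v) := smul_le_smul_of_nonneg_left h (by positivity)
      _ = B *ᵥ (s ^ k • v) := by rw [Matrix.mulVec_smul]
      _ ≤ B *ᵥ (B ^ k *ᵥ v) := Matrix.mulVec_mono_of_nonneg hB ih
      _ = B ^ (k + 1) *ᵥ v := by rw [Matrix.mulVec_mulVec, pow_succ']

theorem le_specRad_of_smul_le_mulVec {n : ℕ} [NeZero n] {B : Matrix (Fin n) (Fin n) ℝ}
    (hB : ∀ i j, 0 ≤ B i j) {v : Fin n → ℝ} (hv : ∀ i, 0 < v i) {s : ℝ}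
    (h : s • v ≤ B *ᵥ v) : s ≤ specRad B := by
  rcases le_or_gt s 0 with hs | hs
  · exact hs.trans (specRad_nonneg B)
  have hv_norm : 0 < ‖v‖ := (hv 0).trans_le ((Real.le_norm_self _).trans (norm_le_pi_norm v 0))
  have hbound : ∀ k : ℕ, v 0 / ‖v‖ * s ^ k ≤ ‖(B.map Complex.ofReal) ^ k‖ := fun k => by
    have hmap : (B.map Complex.ofReal) ^ k = (B ^ k).map Complex.ofReal :=
      (map_pow Complex.ofRealHom.mapMatrix B k).symm
    rw [hmap, Matrix.linfty_opNorm_map_ofReal, div_mul_eq_mul_div,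
      div_le_iff₀ hv_norm]
    calc v 0 * s ^ k = (s ^ k • v) 0 := by rw [Pi.smul_apply, smul_eq_mul, mul_comm]
      _ ≤ (B ^ k *ᵥ v) 0 := pow_smul_le_pow_mulVec hB hs.le h k 0
      _ ≤ ‖B ^ k *ᵥ v‖ := (Real.le_norm_self _).trans (norm_le_pi_norm _ 0)
      _ ≤ ‖B ^ k‖ * ‖v‖ := Matrix.linfty_opNorm_mulVec _ _
  have := (ofReal_le_spectralRadius_of_mul_pow_le_norm_pow _ (div_pos (hv 0) hv_norm) hs.le
    hbound).trans (spectralRadius_map_ofReal_le_specRad B)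
  exact (ENNReal.ofReal_le_ofReal_iff (specRad_nonneg B)).1 this

theorem lt_specRad_of_lt_mulVec {n : ℕ} [NeZero n] {B : Matrix (Fin n) (Fin n) ℝ}
    (hB : ∀ i j, 0 ≤ B i j) {v : Fin n → ℝ} (hv : ∀ i, 0 < v i) {s : ℝ}
    (h : ∀ i, s * v i < (B *ᵥ v) i) : s < specRad B := by
  obtain ⟨i₀, hi₀⟩ := Finite.exists_min fun i => ((B *ᵥ v) i - s * v i) / v i
  set δ := ((B *ᵥ v) i₀ - s * v i₀) / v i₀
  have hδ : 0 < δ := div_pos (sub_pos.2 (h i₀)) (hv i₀)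
  have hle : (s + δ) • v ≤ B *ᵥ v := fun i => by
    have := (le_div_iff₀ (hv i)).1 (hi₀ i)
    simp only [Pi.smul_apply, smul_eq_mul]
    linarith
  linarith [le_specRad_of_smul_le_mulVec hB hv hle]

theorem Relation.ReflTransGen.exists_not_and_and {α : Type*} {r : α → α → Prop}
    {p : α → Prop} {a b : α} (h : Relation.ReflTransGen r a b) (ha : ¬ p a) (hb : p b) :
    ∃ c d, r c d ∧ ¬ p c ∧ p d := by
  induction h using Relation.ReflTransGen.head_induction_on with
  | refl => exact absurd hb ha
  | @head a c hac _ ih =>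
    by_cases hc : p c
    · exact ⟨a, c, hac, ha, hc⟩
    · exact ih hc

theorem Matrix.mulVec_apply_pos {ι : Type*} [Fintype ι] {C : Matrix ι ι ℝ}
    (hC : ∀ i j, 0 < C i j) {x : ι → ℝ} (hx : 0 ≤ x) {j : ι} (hj : 0 < x j) (i : ι) :
    0 < (C *ᵥ x) i :=
  Finset.sum_pos' (fun k _ => mul_nonneg (hC i k).le (hx k))
    ⟨j, Finset.mem_univ j, mul_pos (hC i j) hj⟩

section OneAddPow

variable {ι : Type*} [Fintype ι] [DecidableEq ι] {B : Matrix ι ι ℝ}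

theorem one_add_pow_succ_apply (t : ℕ) (i j : ι) :
    ((1 + B) ^ (t + 1)) i j = ((1 + B) ^ t) i j + ∑ k, B i k * ((1 + B) ^ t) k j := by
  rw [pow_succ', add_mul, one_mul, Matrix.add_apply, Matrix.mul_apply]

theorem one_add_pow_apply_nonneg (hB : ∀ i j, 0 ≤ B i j) (t : ℕ) (i j : ι) :
    0 ≤ ((1 + B) ^ t) i j :=
  Matrix.pow_apply_nonneg (fun i j => add_nonneg (by rw [Matrix.one_apply]; positivity) (hB i j))
    t i j

theorem mul_one_add_pow_apply_le (hB : ∀ i j, 0 ≤ B i j) (t : ℕ) (i k j : ι) :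
    B i k * ((1 + B) ^ t) k j ≤ ((1 + B) ^ (t + 1)) i j := by
  rw [one_add_pow_succ_apply]
  have hsum := Finset.single_le_sum (f := fun l => B i l * ((1 + B) ^ t) l j)
    (fun l _ => mul_nonneg (hB i l) (one_add_pow_apply_nonneg hB t l j)) (Finset.mem_univ k)
  linarith [one_add_pow_apply_nonneg hB t i j]

theorem one_add_pow_apply_mono (hB : ∀ i j, 0 ≤ B i j) (i j : ι) :
    Monotone fun t : ℕ => ((1 + B) ^ t) i j :=
  monotone_nat_of_le_succ fun t => by
    rw [one_add_pow_succ_apply]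
    exact le_add_of_nonneg_right
      (Finset.sum_nonneg fun k _ => mul_nonneg (hB i k) (one_add_pow_apply_nonneg hB t k j))

theorem exists_one_add_pow_apply_pos (hB : ∀ i j, 0 ≤ B i j) {i j : ι}
    (h : Relation.ReflTransGen (fun a b => B a b ≠ 0) i j) : ∃ t : ℕ, 0 < ((1 + B) ^ t) i j := by
  induction h using Relation.ReflTransGen.head_induction_on with
  | refl => exact ⟨0, by simp⟩
  | @head a c hac _ ih =>
    obtain ⟨t, ht⟩ := ih
    exact ⟨t + 1, (mul_pos ((hB a c).lt_of_ne' hac) ht).trans_le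
      (mul_one_add_pow_apply_le hB t a c j)⟩

end OneAddPow

theorem exists_one_add_pow_pos {n : ℕ} {B : Matrix (Fin n) (Fin n) ℝ} (hB : ∀ i j, 0 ≤ B i j)
    (hirr : IsIrreducibleMatrix B) : ∃ T : ℕ, ∀ i j, 0 < ((1 + B) ^ T) i j := by
  choose t ht using fun i j => exists_one_add_pow_apply_pos hB (hirr i j)
  refine ⟨Finset.univ.sup fun p : Fin n × Fin n => t p.1 p.2, fun i j => ?_⟩
  exact (ht i j).trans_le (one_add_pow_apply_mono hB i j
    (Finset.le_sup (f := fun p : Fin n × Fin n => t p.1 p.2) (Finset.mem_univ (i, j))))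

section Irreducible

variable {n : ℕ} {B : Matrix (Fin n) (Fin n) ℝ}

theorem lt_specRad_of_smul_le_mulVec_of_apply_eq_zero (hB : ∀ i j, 0 ≤ B i j)
    (hirr : IsIrreducibleMatrix B) {w : Fin n → ℝ} (hw : 0 ≤ w) {r : ℝ} (hr : r • w ≤ B *ᵥ w) {i₀ j : Fin n}
    (hi₀ : w i₀ = 0) (hj : 0 < w j) : r < specRad B := by
  have : NeZero n := ⟨j.pos.ne'⟩
  obtain ⟨p, q, hpq, hp, hq⟩ :=
    (hirr i₀ j).exists_not_and_and (p := fun i => 0 < w i) hi₀.not_gt hj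
  have hwp : w p = 0 := (hw p).antisymm (not_lt.1 hp) |>.symm
  set d := B *ᵥ w - r • w
  have hd : 0 ≤ d := sub_nonneg.2 hr
  have hdp : 0 < d p := by
    have := Finset.single_le_sum (f := fun k => B p k * w k)
      (fun k _ => mul_nonneg (hB p k) (hw k)) (Finset.mem_univ q)
    have hpos := mul_pos ((hB p q).lt_of_ne' hpq) hq
    simp only [d, Pi.sub_apply, Pi.smul_apply, hwp, smul_zero, sub_zero]
    exact hpos.trans_le this
  obtain ⟨T, hT⟩ := exists_one_add_pow_pos hB hirr
  set C := (1 + B) ^ T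
  have hcomm : B * C = C * B :=
    (((Commute.one_right B).add_right (Commute.refl B)).pow_right T).eq
  have hBCw : B *ᵥ (C *ᵥ w) = r • (C *ᵥ w) + C *ᵥ d := by
    rw [Matrix.mulVec_mulVec, hcomm, ← Matrix.mulVec_mulVec, ← Matrix.mulVec_smul,
      ← Matrix.mulVec_add, add_sub_cancel]
  refine lt_specRad_of_lt_mulVec hB (Matrix.mulVec_apply_pos hT hw hj) fun i => ?_
  rw [hBCw, Pi.add_apply, Pi.smul_apply, smul_eq_mul, lt_add_iff_pos_right]
  exact Matrix.mulVec_apply_pos hT hd hdp i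

theorem eq_zero_of_mulVec_apply_eq_specRad_mul (hB : ∀ i j, 0 ≤ B i j)
    (hirr : IsIrreducibleMatrix B) {s : Set (Fin n)} {i₀ : Fin n} (hi₀ : i₀ ∉ s)
    {x : Fin n → ℝ} (hx : ∀ k ∉ s, x k = 0) (h : ∀ i ∈ s, (B *ᵥ x) i = specRad B * x i) :
    x = 0 := by
  by_contra hne
  obtain ⟨j, hj⟩ := Function.ne_iff.1 hne
  refine (lt_specRad_of_smul_le_mulVec_of_apply_eq_zero hB hirr (w := fun i => |x i|)
    (fun i => abs_nonneg _) (fun i => ?_) (i₀ := i₀) (by simp [hx i₀ hi₀]) (abs_pos.2 hj)).false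
  by_cases hi : i ∈ s
  · calc specRad B * |x i| = |(B *ᵥ x) i| := by
          rw [h i hi, abs_mul, abs_of_nonneg (specRad_nonneg B)]
      _ ≤ ∑ k, |B i k * x k| := Finset.abs_sum_le_sum_abs (fun k => B i k * x k) Finset.univ
      _ = (B *ᵥ fun i => |x i|) i := by
          simp only [abs_mul, abs_of_nonneg (hB _ _)]; rfl
  · simp only [Pi.smul_apply, hx i hi, abs_zero, smul_zero]
    exact dotProduct_nonneg_of_nonneg (fun k => hB i k) (fun k => abs_nonneg _)

end Irreducible

theorem Matrix.submatrix_mulVec_apply_of_eq_zero {ι R : Type*} [Fintype ι]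
    [NonUnitalNonAssocSemiring R] (A : Matrix ι ι R) {s : Set ι} [Fintype s] {x : ι → R}
    (hx : ∀ k ∉ s, x k = 0) (i : s) :
    ((A.submatrix (↑) (↑) : Matrix s s R) *ᵥ fun k : s => x k) i = (A *ᵥ x) i := by
  simp only [Matrix.mulVec, dotProduct, Matrix.submatrix_apply]
  rw [Finset.sum_set_coe (f := fun k => A i k * x k)]
  exact Finset.sum_subset (Finset.subset_univ _) fun k _ hk => by
    rw [hx k (by simpa using hk), mul_zero]

theorem Set.exists_eq_zero_of_notMem_and_restrict_eq {ι R : Type*} [Zero R] {s : Set ι}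
    (y : s → R) : ∃ x : ι → R, (∀ k ∉ s, x k = 0) ∧ (fun k : s => x k) = y :=
  ⟨Function.extend (↑) y 0, fun _ hk => Function.extend_apply' _ _ _ fun ⟨a, ha⟩ => hk (ha ▸ a.2),
    funext fun _ => Subtype.val_injective.extend_apply _ _ _⟩

theorem isUnit_submatrix_specRad_smul_one_sub {n : ℕ} {B : Matrix (Fin n) (Fin n) ℝ}
    (hB : ∀ i j, 0 ≤ B i j) (hirr : IsIrreducibleMatrix B) {s : Set (Fin n)} [Fintype s]
    {i₀ : Fin n} (hi₀ : i₀ ∉ s) :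
    IsUnit ((specRad B • 1 - B).submatrix (↑) (↑) : Matrix s s ℝ) := by
  rw [Matrix.isUnit_iff_isUnit_det, isUnit_iff_ne_zero, Ne, ← Matrix.exists_mulVec_eq_zero_iff]
  rintro ⟨y, hy, hMy⟩
  obtain ⟨x, hx, hxy⟩ := s.exists_eq_zero_of_notMem_and_restrict_eq y
  have hx0 : x = 0 := eq_zero_of_mulVec_apply_eq_specRad_mul hB hirr hi₀ hx fun i hi => by
    have := congrFun hMy ⟨i, hi⟩
    rw [← hxy, Matrix.submatrix_mulVec_apply_of_eq_zero _ hx, Matrix.sub_mulVec,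
      Matrix.smul_mulVec, Matrix.one_mulVec] at this
    simp only [Pi.sub_apply, Pi.smul_apply, smul_eq_mul, Pi.zero_apply, sub_eq_zero] at this
    exact this.symm
  exact hy (by rw [← hxy, hx0]; rfl)

theorem IsIrreducibleMatrix.of_ne_zero_imp {n : ℕ} {A B : Matrix (Fin n) (Fin n) ℝ}
    (hA : IsIrreducibleMatrix A) (h : ∀ a b, a ≠ b → A a b ≠ 0 → B a b ≠ 0) :
    IsIrreducibleMatrix B := fun i j => by
  rw [← Relation.reflTransGen_reflGen]
  refine Relation.ReflTransGen.mono (fun a b hab => ?_) i j (hA i j)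
  by_cases heq : a = b
  · exact heq ▸ Relation.ReflGen.refl
  · exact Relation.ReflGen.single (h a b heq hab)

theorem IsSingularMMatrix.isUnit_submatrix {n : ℕ} {A : Matrix (Fin n) (Fin n) ℝ}
    (hA : IsSingularMMatrix A) (hirr : IsIrreducibleMatrix A) {s : Set (Fin n)} [Fintype s]
    {i₀ : Fin n} (hi₀ : i₀ ∉ s) : IsUnit (A.submatrix (↑) (↑) : Matrix s s ℝ) := by
  obtain ⟨-, B, hB, rfl⟩ := hA
  refine isUnit_submatrix_specRad_smul_one_sub hB (hirr.of_ne_zero_imp fun a b hab h => ?_) hi₀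
  simpa [Matrix.sub_apply, Matrix.one_apply_ne hab] using h

theorem existsUnique_pi_of_forall_existsUnique {α : Type*} {β : α → Type*} {Q : ∀ a, β a → Prop}
    (h : ∀ a, ∃! b, Q a b) : ∃! f : ∀ a, β a, ∀ a, Q a (f a) := by
  choose f hf huniq using h
  exact ⟨f, hf, fun g hg => funext fun a => huniq a _ (hg a)⟩

theorem existsUnique_mulVec_eq_on {ι K : Type*} [Fintype ι] [DecidableEq ι] [CommRing K]
    (A : Matrix ι ι K) (s : Set ι) [Fintype s]
    (hA : IsUnit (A.submatrix (↑) (↑) : Matrix s s K)) (b : ι → K) :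
    ∃! x : ι → K, (∀ k ∉ s, x k = 0) ∧ ∀ i ∈ s, (A *ᵥ x) i = b i := by
  obtain ⟨y, hy⟩ := Matrix.mulVec_surjective_iff_isUnit.2 hA fun i : s => b i
  obtain ⟨x, hx, hxy⟩ := s.exists_eq_zero_of_notMem_and_restrict_eq y
  refine ⟨x, ⟨hx, fun i hi => ?_⟩, fun x' ⟨hx', hx'b⟩ => funext fun k => ?_⟩
  · rw [← Matrix.submatrix_mulVec_apply_of_eq_zero A hx ⟨i, hi⟩, hxy, hy]
  by_cases hk : k ∈ s
  · have hrestrict : (fun k : s => x' k) = y := Matrix.mulVec_injective_of_isUnit hA <| by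
      rw [hy]; funext i; rw [Matrix.submatrix_mulVec_apply_of_eq_zero A hx', hx'b i i.2]
    exact (congrFun hrestrict ⟨k, hk⟩).trans (congrFun hxy ⟨k, hk⟩).symm
  · rw [hx k hk, hx' k hk]

open Classical in
theorem existsUnique_isFSAILowerFactor {n : ℕ} (A : Matrix (Fin n) (Fin n) ℝ)
    {S : Set (Fin n × Fin n)} (hS : S ⊆ {p | p.2 ≤ p.1})
    (hA : ∀ i, IsUnit (A.submatrix (↑) (↑) : Matrix {j | (i, j) ∈ S} {j | (i, j) ∈ S} ℝ)) :
    ∃! L, IsFSAILowerFactor A L S := by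
  have hrows : ∀ L, IsFSAILowerFactor A L S ↔ ∀ i, (∀ j ∉ {j | (i, j) ∈ S}, L i j = 0) ∧
      ∀ j ∈ {j | (i, j) ∈ S}, (Aᵀ *ᵥ L i) j = if i = j then 1 else 0 := fun L => by
    simp only [Matrix.mulVec_transpose]
    refine ⟨fun ⟨_, hzero, hmul⟩ i => ⟨fun j hj => hzero (i, j) hj, fun j hj => hmul (i, j) hj⟩,
      fun h => ⟨fun i j hij => (h i).1 j fun hj => not_le.2 hij (hS hj),
        fun p hp => (h p.1).1 p.2 hp, fun p hp => (h p.1).2 p.2 hp⟩⟩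
  rw [existsUnique_congr hrows]
  refine existsUnique_pi_of_forall_existsUnique fun i => existsUnique_mulVec_eq_on Aᵀ _ ?_ _
  rw [← Matrix.transpose_submatrix]
  exact (Matrix.isUnit_transpose _).2 (hA i)

theorem isFSAIUpperFactor_iff_transpose {n : ℕ} {A U : Matrix (Fin n) (Fin n) ℝ}
    {S : Set (Fin n × Fin n)} :
    IsFSAIUpperFactor A U S ↔ IsFSAILowerFactor Aᵀ Uᵀ (Prod.swap ⁻¹' S) := by
  simp only [IsFSAIUpperFactor, IsFSAILowerFactor, IsUpperTri, IsLowerTri, ← Matrix.transpose_mul,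
    Matrix.transpose_apply, Set.mem_preimage, Prod.forall, Prod.swap_prod_mk]
  exact and_congr forall_comm (and_congr forall_comm (forall_comm.trans (by simp [eq_comm])))

open Classical in
theorem existsUnique_isFSAIUpperFactor {n : ℕ} (A : Matrix (Fin n) (Fin n) ℝ)
    {S : Set (Fin n × Fin n)} (hS : S ⊆ {p | p.1 ≤ p.2})
    (hA : ∀ j, IsUnit (A.submatrix (↑) (↑) : Matrix {i | (i, j) ∈ S} {i | (i, j) ∈ S} ℝ)) :
    ∃! U, IsFSAIUpperFactor A U S := by
  simp_rw [isFSAIUpperFactor_iff_transpose]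
  refine (Equiv.existsUnique_congr_right (e := (Matrix.transposeAddEquiv _ _ ℝ).toEquiv)
    (q := fun L => IsFSAILowerFactor Aᵀ L _)).2 ?_
  refine existsUnique_isFSAILowerFactor Aᵀ (fun p hp => hS hp) fun j => ?_
  rw [← Matrix.transpose_submatrix]
  exact (Matrix.isUnit_transpose _).2 (hA j)

theorem exists_notMem_of_top_notMem {ι : Type*} [LinearOrder ι] {S : Set (ι × ι)}
    (hS : S ⊆ {p | p.2 ≤ p.1}) {m j₀ : ι} (hm : IsTop m) (hmj₀ : (m, j₀) ∉ S) (i : ι) :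
    ∃ j, (i, j) ∉ S := by
  rcases (hm i).lt_or_eq with hlt | rfl
  · exact ⟨m, fun h => not_le.2 hlt (hS h)⟩
  · exact ⟨j₀, hmj₀⟩

theorem fsai_exists_unique_general_excluded_pair (n : ℕ)
    (A : Matrix (Fin n) (Fin n) ℝ)
    (hA : IsSingularMMatrix A) (hirr : IsIrreducibleMatrix A)
    (j0 : Fin n) (hj0 : (j0 : ℕ) < n - 1) :
    (∀ S : Set (Fin n × Fin n),
      S ⊆ {p : Fin n × Fin n | p.2 ≤ p.1} → (∀ i : Fin n, (i, i) ∈ S) →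
      ((⟨n - 1, by omega⟩ : Fin n), j0) ∉ S →
      ∃! L : Matrix (Fin n) (Fin n) ℝ, IsFSAILowerFactor A L S) ∧
    (∀ S : Set (Fin n × Fin n),
      S ⊆ {p : Fin n × Fin n | p.1 ≤ p.2} → (∀ i : Fin n, (i, i) ∈ S) →
      (j0, (⟨n - 1, by omega⟩ : Fin n)) ∉ S →
      ∃! U : Matrix (Fin n) (Fin n) ℝ, IsFSAIUpperFactor A U S) := by
  classical
  have htop : IsTop (⟨n - 1, by omega⟩ : Fin n) := fun i =>
    Fin.le_def.2 (Nat.le_sub_one_of_lt i.2)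
  refine ⟨fun S hS _ hS_top => existsUnique_isFSAILowerFactor A hS fun i => ?_,
    fun S hS _ hS_top => existsUnique_isFSAIUpperFactor A hS fun j => ?_⟩
  · obtain ⟨j, hj⟩ := exists_notMem_of_top_notMem hS htop hS_top i
    exact hA.isUnit_submatrix hirr hj
  · obtain ⟨i, hi⟩ := exists_notMem_of_top_notMem (S := Prod.swap ⁻¹' S) (fun p hp => hS hp)
      htop hS_top j
    exact hA.isUnit_submatrix hirr hi
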